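/- Let $g_1,\dots,g_N \in \mathbb{R}^d$, fix $j$, and suppose $g_j \in \mathrm{span}\{g_{j'} : j' \ne j\}$. Let $S = \sum_{j' \ne j} g_{j'} g_{j'}^\top$ and let $c > 0$. Then $\mathrm{pdet}(S + c^2 g_j g_j^\top) = \mathrm{pdet}(S)\,(1 + c^2\, g_j^\top S^+ g_j)$ and $\mathrm{rank}(S + c^2 g_j g_j^\top) = \mathrm{rank}(S)$. -/

import Mathlib

open Matrix
open scoped Classical

/-- The pseudo-determinant of a real square matrix: the product of the nonzero eigenvalues
if the matrix is symmetric (Hermitian), and (junk value) `0` otherwise. -/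
noncomputable def pdet {d : ℕ} (A : Matrix (Fin d) (Fin d) ℝ) : ℝ :=
  if h : A.IsHermitian then
    ∏ i : Fin d, (if h.eigenvalues i = 0 then 1 else h.eigenvalues i)
  else 0

/-- `B` satisfies the four Penrose conditions for being the Moore–Penrose pseudoinverse
of `A` (over `ℝ`). -/
def IsMoorePenroseInverse {d : ℕ} (A B : Matrix (Fin d) (Fin d) ℝ) : Prop :=
  A * B * A = A ∧ B * A * B = B ∧ (A * B)ᵀ = A * B ∧ (B * A)ᵀ = B * A

/-! Let `K = 1 - S⁺ S`, the orthogonal projector onto `ker S`. For a symmetric `A` with `K A = 0`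
whose kernel is fixed by `K`, an eigenbasis of `A` diagonalises `A + K` with the zero eigenvalues
replaced by `1`, so `det (A + K) = pdet A`. Since `g_j ∈ range S = span {g_j' : j' ≠ j}`, adding
`c² g_j g_jᵀ` does not change `ker S`; hence both `S` and `S + c² g_j g_jᵀ` are such an `A`, their
ranks agree, and `S + c² g_j g_jᵀ + K = (S + K) (1 + c² S⁺ g_j g_jᵀ)` together with the matrix
determinant lemma gives the formula for the pseudo-determinant. -/

theorem Matrix.det_one_add_vecMulVec {n R : Type*} [Fintype n] [DecidableEq n] [CommRing R]
    (u v : n → R) :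
    (1 + vecMulVec u v).det = 1 + v ⬝ᵥ u := by
  rw [vecMulVec_eq Unit, det_one_add_replicateCol_mul_replicateRow]

theorem Matrix.posSemidef_vecMulVec_self {n : Type*} [Fintype n] (q : n → ℝ) :
    (vecMulVec q q).PosSemidef := by
  simpa using posSemidef_vecMulVec_self_star q

theorem Matrix.IsHermitian.transpose_eq_self {n : Type*} {A : Matrix n n ℝ} (hA : A.IsHermitian) :
    Aᵀ = A :=
  (conjTranspose_eq_transpose_of_trivial A).symm.trans hA

open scoped ComplexOrder in
theorem Matrix.PosSemidef.mulVec_eq_zero_of_add_mulVec_eq_zero {n 𝕜 : Type*} [Fintype n]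
    [RCLike 𝕜] {A C : Matrix n n 𝕜} (hA : A.PosSemidef) (hC : C.PosSemidef) {x : n → 𝕜}
    (hx : (A + C) *ᵥ x = 0) : A *ᵥ x = 0 := by
  have h : star x ⬝ᵥ A *ᵥ x + star x ⬝ᵥ C *ᵥ x = 0 := by
    rw [← dotProduct_add, ← add_mulVec, hx, dotProduct_zero]
  exact (hA.dotProduct_mulVec_zero_iff x).mp ((add_eq_zero_iff_of_nonneg
    (hA.dotProduct_mulVec_nonneg x) (hC.dotProduct_mulVec_nonneg x)).mp h).1

theorem Matrix.rank_eq_rank_of_ker_eq {n R : Type*} [Fintype n] [Field R] {M N : Matrix n n R}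
    (h : LinearMap.ker M.mulVecLin = LinearMap.ker N.mulVecLin) : M.rank = N.rank := by
  have hM := LinearMap.finrank_range_add_finrank_ker M.mulVecLin
  have hN := LinearMap.finrank_range_add_finrank_ker N.mulVecLin
  rw [h] at hM
  unfold Matrix.rank
  omega

theorem Matrix.range_mulVecLin_sum_vecMulVec_self {ι n R : Type*} [Fintype n] [Field R]
    [LinearOrder R] [IsStrictOrderedRing R] (s : Finset ι) (v : ι → n → R) :
    LinearMap.range (∑ i ∈ s, vecMulVec (v i) (v i)).mulVecLin = Submodule.span R (v '' s) := by
  set G : Matrix n s R := of fun a i => v i a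
  have hS : ∑ i ∈ s, vecMulVec (v i) (v i) = G * Gᵀ := by
    ext a b
    simp [G, mul_apply, Matrix.sum_apply, vecMulVec_apply, ← Finset.sum_coe_sort s]
  have hG : LinearMap.range G.mulVecLin = Submodule.span R (v '' s) := by
    rw [range_mulVecLin, Set.image_eq_range]
    rfl
  rw [hS, ← hG]
  refine Submodule.eq_of_le_of_finrank_eq ?_ (rank_self_mul_transpose G)
  rw [mulVecLin_mul]
  exact LinearMap.range_comp_le_range _ _

theorem Matrix.add_mulVec_eq_smul_of_mulVec_eq_smul {n : Type*} [Fintype n]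
    {A K : Matrix n n ℝ} (hKA : K * A = 0) (hK : ∀ x, A *ᵥ x = 0 → K *ᵥ x = x) {v : n → ℝ}
    {μ : ℝ} (hv : A *ᵥ v = μ • v) :
    (A + K) *ᵥ v = (if μ = 0 then 1 else μ) • v := by
  by_cases hμ : μ = 0
  · rw [hμ, zero_smul] at hv
    rw [if_pos hμ, add_mulVec, hv, hK v hv, zero_add, one_smul]
  · have hKv : K *ᵥ v = 0 := by
      rw [← inv_smul_smul₀ hμ v, mulVec_smul, ← hv, mulVec_mulVec, hKA, zero_mulVec, smul_zero]
    rw [if_neg hμ, add_mulVec, hv, hKv, add_zero]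

section

variable {d : ℕ}

theorem det_add_eq_pdet {A K : Matrix (Fin d) (Fin d) ℝ} (hA : A.IsHermitian) (hKA : K * A = 0)
    (hK : ∀ x, A *ᵥ x = 0 → K *ᵥ x = x) : (A + K).det = pdet A := by
  set U : Matrix (Fin d) (Fin d) ℝ := (hA.eigenvectorUnitary : Matrix (Fin d) (Fin d) ℝ)
  set μ : Fin d → ℝ := fun i => if hA.eigenvalues i = 0 then 1 else hA.eigenvalues i
  have hAKU : (A + K) * U = U * diagonal μ := by
    refine ext_of_mulVec_single fun i => ?_
    rw [← mulVec_mulVec, ← mulVec_mulVec, diagonal_mulVec_single, ← smul_eq_mul, Pi.single_smul',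
      mulVec_smul, IsHermitian.eigenvectorUnitary_mulVec]
    exact add_mulVec_eq_smul_of_mulVec_eq_smul hKA hK (hA.mulVec_eigenvectorBasis i)
  apply mul_right_cancel₀ (UnitaryGroup.det_isUnit hA.eigenvectorUnitary).ne_zero
  rw [← det_mul, hAKU, det_mul, det_diagonal, mul_comm, pdet, dif_pos hA]

namespace IsMoorePenroseInverse

variable {A B : Matrix (Fin d) (Fin d) ℝ}

theorem mul_mul_self_of_transpose_eq (hB : IsMoorePenroseInverse A B) (hA : Aᵀ = A) :
    B * A * A = A := by
  calc B * A * A = (B * A)ᵀ * A := by rw [hB.2.2.2]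
  _ = (A * B * A)ᵀ := by rw [transpose_mul, transpose_mul, transpose_mul, hA, Matrix.mul_assoc]
  _ = A := by rw [hB.1, hA]

end IsMoorePenroseInverse

section RankOneUpdate

variable {A B : Matrix (Fin d) (Fin d) ℝ} {q : Fin d → ℝ} {r : ℝ}

theorem mulVec_add_smul_vecMulVec_self_eq_zero_iff (hA : A.PosSemidef)
    (hq : q ∈ LinearMap.range A.mulVecLin) (hr : 0 ≤ r) (x : Fin d → ℝ) :
    (A + r • vecMulVec q q) *ᵥ x = 0 ↔ A *ᵥ x = 0 := by
  refine ⟨hA.mulVec_eq_zero_of_add_mulVec_eq_zero ((posSemidef_vecMulVec_self q).smul hr),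
    fun hx => ?_⟩
  obtain ⟨y, rfl⟩ : ∃ y, A *ᵥ y = q := hq
  have hqx : A *ᵥ y ⬝ᵥ x = 0 := by
    rw [dotProduct_comm, dotProduct_mulVec, ← mulVec_transpose, hA.1.transpose_eq_self, hx,
      zero_dotProduct]
  rw [add_mulVec, smul_mulVec, vecMulVec_mulVec, hqx, hx]
  simp

theorem rank_add_smul_vecMulVec_self (hA : A.PosSemidef)
    (hq : q ∈ LinearMap.range A.mulVecLin) (hr : 0 ≤ r) :
    (A + r • vecMulVec q q).rank = A.rank :=
  rank_eq_rank_of_ker_eq <| Submodule.ext fun x => by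
    simpa only [LinearMap.mem_ker, mulVecLin_apply]
      using mulVec_add_smul_vecMulVec_self_eq_zero_iff hA hq hr x

theorem add_smul_vecMulVec_self_add_eq_mul (hB : IsMoorePenroseInverse A B)
    (hq : q ∈ LinearMap.range A.mulVecLin) :
    A + r • vecMulVec q q + (1 - B * A) = (A + (1 - B * A)) * (1 + vecMulVec (r • B *ᵥ q) q) := by
  obtain ⟨y, rfl⟩ : ∃ y, A *ᵥ y = q := hq
  have hBq : (A + (1 - B * A)) *ᵥ B *ᵥ A *ᵥ y = A *ᵥ y := by
    simp only [mulVec_mulVec, Matrix.add_mul, Matrix.sub_mul, Matrix.one_mul, ← Matrix.mul_assoc,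
      hB.1, hB.2.1, sub_self, add_zero]
  rw [Matrix.mul_add, Matrix.mul_one, mul_vecMulVec, mulVec_smul, hBq, ← smul_vecMulVec]
  abel

theorem pdet_add_smul_vecMulVec_self (hA : A.PosSemidef) (hB : IsMoorePenroseInverse A B)
    (hq : q ∈ LinearMap.range A.mulVecLin) (hr : 0 ≤ r) :
    pdet (A + r • vecMulVec q q) = pdet A * (1 + r * (q ⬝ᵥ (B *ᵥ q))) := by
  have hKA : (1 - B * A) * A = 0 := by
    rw [Matrix.sub_mul, Matrix.one_mul, hB.mul_mul_self_of_transpose_eq hA.1.transpose_eq_self,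
      sub_self]
  have hK : ∀ x, A *ᵥ x = 0 → (1 - B * A) *ᵥ x = x := fun x hx => by
    rw [sub_mulVec, one_mulVec, ← mulVec_mulVec, hx, mulVec_zero, sub_zero]
  have hKq : (1 - B * A) *ᵥ q = 0 := by
    obtain ⟨y, rfl⟩ : ∃ y, A *ᵥ y = q := hq
    rw [mulVec_mulVec, hKA, zero_mulVec]
  have hKA' : (1 - B * A) * (A + r • vecMulVec q q) = 0 := by
    rw [Matrix.mul_add, hKA, Matrix.mul_smul, mul_vecMulVec, hKq]
    simp
  rw [← det_add_eq_pdet (hA.add ((posSemidef_vecMulVec_self q).smul hr)).1 hKA'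
      fun x hx => hK x ((mulVec_add_smul_vecMulVec_self_eq_zero_iff hA hq hr x).mp hx),
    add_smul_vecMulVec_self_add_eq_mul hB hq, det_mul, det_add_eq_pdet hA.1 hKA hK,
    det_one_add_vecMulVec, dotProduct_smul, smul_eq_mul]

end RankOneUpdate

end

theorem pdet_rank_perturbation_general {N d : ℕ} (g : Fin N → (Fin d → ℝ)) (j : Fin N)
    (hspan : g j ∈ Submodule.span ℝ (g '' {j' | j' ≠ j}))
    (Sp : Matrix (Fin d) (Fin d) ℝ)
    (hSp : IsMoorePenroseInverse (∑ j' ∈ Finset.univ.filter (· ≠ j),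
      vecMulVec (g j') (g j')) Sp)
    (c : ℝ) :
    pdet ((∑ j' ∈ Finset.univ.filter (· ≠ j), vecMulVec (g j') (g j')) +
        c ^ 2 • vecMulVec (g j) (g j))
      = pdet (∑ j' ∈ Finset.univ.filter (· ≠ j), vecMulVec (g j') (g j')) *
        (1 + c ^ 2 * (g j ⬝ᵥ (Sp *ᵥ g j))) ∧
    ((∑ j' ∈ Finset.univ.filter (· ≠ j), vecMulVec (g j') (g j')) +
        c ^ 2 • vecMulVec (g j) (g j)).rank
      = (∑ j' ∈ Finset.univ.filter (· ≠ j), vecMulVec (g j') (g j')).rank := by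
  have hS : (∑ j' ∈ Finset.univ.filter (· ≠ j), vecMulVec (g j') (g j')).PosSemidef :=
    posSemidef_sum _ fun i _ => posSemidef_vecMulVec_self (g i)
  have hq : g j ∈ LinearMap.range
      (∑ j' ∈ Finset.univ.filter (· ≠ j), vecMulVec (g j') (g j')).mulVecLin := by
    rw [range_mulVecLin_sum_vecMulVec_self]
    simpa using hspan
  exact ⟨pdet_add_smul_vecMulVec_self hS hSp hq (sq_nonneg c),
    rank_add_smul_vecMulVec_self hS hq (sq_nonneg c)⟩

/-- Let `S = ∑_{j' ≠ j} g_{j'} g_{j'}ᵀ` and suppose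
`g j ∈ span {g j' : j' ≠ j}`. Then for any `c > 0`,
`pdet (S + c² g_j g_jᵀ) = pdet S * (1 + c² g_jᵀ S⁺ g_j)` and the rank is unchanged. -/
theorem pdet_rank_perturbation {N d : ℕ} (g : Fin N → (Fin d → ℝ)) (j : Fin N)
    (hspan : g j ∈ Submodule.span ℝ (g '' {j' | j' ≠ j}))
    (Sp : Matrix (Fin d) (Fin d) ℝ)
    (hSp : IsMoorePenroseInverse (∑ j' ∈ Finset.univ.filter (· ≠ j),
      vecMulVec (g j') (g j')) Sp)
    (c : ℝ) (hc : 0 < c) :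
    pdet ((∑ j' ∈ Finset.univ.filter (· ≠ j), vecMulVec (g j') (g j')) +
        c ^ 2 • vecMulVec (g j) (g j))
      = pdet (∑ j' ∈ Finset.univ.filter (· ≠ j), vecMulVec (g j') (g j')) *
        (1 + c ^ 2 * (g j ⬝ᵥ (Sp *ᵥ g j))) ∧
    ((∑ j' ∈ Finset.univ.filter (· ≠ j), vecMulVec (g j') (g j')) +
        c ^ 2 • vecMulVec (g j) (g j)).rank
      = (∑ j' ∈ Finset.univ.filter (· ≠ j), vecMulVec (g j') (g j')).rank :=
  pdet_rank_perturbation_general g j hspan Sp hSp c
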